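/- arXiv:1312.5530 — 3 statements merged into one kernel-verified Lean document; each statement's English description precedes it below -/
import Mathlib

section
/- Suppose two parameter tuples (ρ, σ, α₁, α₀, α₋₁, Γ) and (ρ̃, σ̃, α̃₁, α̃₀, α̃₋₁, Γ̃) of the model (M) both satisfy the normalization σ²/(1−ρ²) = 1 (respectively σ̃²/(1−ρ̃²) = 1) and have linearly independent loading vectors (α₁, α₀, α₋₁ linearly independent in ℝ^K, and likewise α̃₁, α̃₀, α̃₋₁). If the two tuples produce the same covariance matrices C_k = C̃_k for k = 0, 1, 2, 3, then the parameters coincide up to the sign of the loading vectors: ρ = ρ̃, σ = σ̃, Γ = Γ̃, and there exists ε ∈ {−1, 1} such that α̃ᵢ = ε αᵢ for each i ∈ {−1, 0, 1}. -/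
/-!
Comparing `C₃ = ρ C₂` with `C̃₃ = ρ̃ C̃₂` gives `ρ = ρ̃`, and the rank-one matrices `C₂ = u vᵀ = ũ ṽᵀ`
give `ũ = s u`, `v = s ṽ` for some scalar `s`. Because `|ρ| < 1`, the row vectors `b̃, ṽ` of
`C₁ = α₁ bᵀ + (α₀ + ρ α₋₁) vᵀ` are linearly independent, so testing `C₁` against a dual pair of
vectors identifies `α̃₁` and `α̃₀ + ρ α̃₋₁` in terms of the `αᵢ`. Comparing coefficients in the
basis `α₁, α₀, α₋₁` then forces `s² = 1` and `α̃ᵢ = s αᵢ`, after which `C₀` gives `Γ = Γ̃`.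
-/

open Matrix

theorem LinearIndependent.eq_zero_of_triple {R M : Type*} [Ring R] [AddCommGroup M] [Module R M]
    {x y z : M} (h : LinearIndependent R ![x, y, z]) {a b c : R}
    (h' : a • x + b • y + c • z = 0) : a = 0 ∧ b = 0 ∧ c = 0 := by
  have := Fintype.linearIndependent_iff.mp h ![a, b, c] (by simpa [Fin.sum_univ_three] using h')
  exact ⟨this 0, this 1, this 2⟩

section RankTwo

variable {K ι : Type*} [Field K]

theorem exists_dotProduct_eq_one_and_eq_zero [Fintype ι] {w₁ w₂ : ι → K}
    (h : LinearIndependent K ![w₁, w₂]) : ∃ x, w₁ ⬝ᵥ x = 1 ∧ w₂ ⬝ᵥ x = 0 := by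
  classical
  have hw : w₁ ∉ K ∙ w₂ := by
    intro hmem
    obtain ⟨a, rfl⟩ := Submodule.mem_span_singleton.mp hmem
    simpa using (h.eq_zero_of_pair (s := 1) (t := -a) (by simp)).1
  obtain ⟨f, hf, hf₂⟩ := Submodule.exists_dual_map_eq_bot_of_notMem hw inferInstance
  have hfw₂ : f w₂ = 0 := by
    have := Submodule.mem_map_of_mem (f := f) (Submodule.mem_span_singleton_self w₂)
    rwa [hf₂, Submodule.mem_bot] at this
  set y := (dotProductEquiv K ι).symm f
  have hy : ∀ w, w ⬝ᵥ y = f w := fun w => by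
    rw [dotProduct_comm, ← dotProductEquiv_apply_apply, LinearEquiv.apply_symm_apply]
  exact ⟨(f w₁)⁻¹ • y, by simp [hy, hf], by simp [hy, hfw₂]⟩

theorem vecMulVec_mulVec_eq_dotProduct_smul [Fintype ι] (u v w : ι → K) :
    vecMulVec u v *ᵥ w = (v ⬝ᵥ w) • u := by
  rw [vecMulVec_mulVec, op_smul_eq_smul]

theorem exists_smul_of_vecMulVec_eq {u v u' v' : ι → K} (hu : u ≠ 0) (hv' : v' ≠ 0)
    (h : vecMulVec u v = vecMulVec u' v') : ∃ s : K, u' = s • u ∧ v = s • v' := by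
  obtain ⟨i, hi⟩ := Function.ne_iff.mp hu
  obtain ⟨j, hj⟩ := Function.ne_iff.mp hv'
  have hij : ∀ i j, u i * v j = u' i * v' j := fun i j => by
    simpa only [vecMulVec_apply] using congr($h i j)
  have hu' : u' = (v j / v' j) • u := funext fun i' => by
    rw [Pi.smul_apply, smul_eq_mul, div_mul_eq_mul_div, eq_div_iff hj, mul_comm (v j), hij]
  refine ⟨v j / v' j, hu', funext fun k => mul_left_cancel₀ hi ?_⟩
  rw [hij, hu', Pi.smul_apply, Pi.smul_apply, smul_eq_mul, smul_eq_mul]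
  ring

theorem exists_eq_of_vecMulVec_add_vecMulVec_eq [Fintype ι] {a p a' p' b v b' v' : ι → K} {s : K}
    (hli : LinearIndependent K ![b', v']) (ha : a ≠ 0) (hv : v = s • v')
    (h : vecMulVec a b + vecMulVec p v = vecMulVec a' b' + vecMulVec p' v') :
    ∃ l k : K, a' = l • a ∧ p' = k • a + s • p ∧ b = l • b' + k • v' := by
  classical
  have hz : ∀ z, (b ⬝ᵥ z) • a + (v ⬝ᵥ z) • p = (b' ⬝ᵥ z) • a' + (v' ⬝ᵥ z) • p' := fun z => by
    simpa only [add_mulVec, vecMulVec_mulVec_eq_dotProduct_smul] using congrArg (· *ᵥ z) h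
  obtain ⟨x, hb'x, hv'x⟩ := exists_dotProduct_eq_one_and_eq_zero hli
  obtain ⟨y, hv'y, hb'y⟩ := exists_dotProduct_eq_one_and_eq_zero
    (LinearIndependent.pair_symm_iff.mp hli : LinearIndependent K ![v', b'])
  have ha' : a' = (b ⬝ᵥ x) • a := by simpa [hv, hb'x, hv'x] using (hz x).symm
  have hp' : p' = (b ⬝ᵥ y) • a + s • p := by simpa [hv, hb'y, hv'y] using (hz y).symm
  refine ⟨_, _, ha', hp', funext fun j => ?_⟩
  have hj := hz (Pi.single j 1)
  simp only [dotProduct_single_one, ha', hp', hv, Pi.smul_apply, smul_eq_mul] at hj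
  have : (b j - ((b ⬝ᵥ x) * b' j + (b ⬝ᵥ y) * v' j)) • a = 0 := by
    linear_combination (norm := module) hj
  simpa [sub_eq_zero, ha] using this

end RankTwo

section Model

variable {K M : Type*} [Field K] [AddCommGroup M] [Module K M]

def modelU (ρ : K) (α1 α0 αm1 : M) : M := α1 + ρ • α0 + ρ ^ 2 • αm1

def modelV (ρ : K) (α1 α0 αm1 : M) : M := ρ ^ 2 • α1 + ρ • α0 + αm1

def modelB (ρ : K) (α1 α0 αm1 : M) : M := ρ • α1 + α0 + ρ • αm1

variable {ρ s : K} {α1 α0 αm1 β1 β0 βm1 : M}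

theorem modelU_ne_zero (h : LinearIndependent K ![α1, α0, αm1]) : modelU ρ α1 α0 αm1 ≠ 0 :=
  fun h0 => one_ne_zero (h.eq_zero_of_triple (a := 1) (by simpa [modelU] using h0)).1

theorem modelV_ne_zero (h : LinearIndependent K ![α1, α0, αm1]) : modelV ρ α1 α0 αm1 ≠ 0 :=
  fun h0 => one_ne_zero (h.eq_zero_of_triple (c := 1) (by simpa [modelV] using h0)).2.2

theorem modelU_smul (ρ s : K) (α1 α0 αm1 : M) :
    modelU ρ (s • α1) (s • α0) (s • αm1) = s • modelU ρ α1 α0 αm1 := by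
  simp only [modelU]; module

theorem modelV_smul (ρ s : K) (α1 α0 αm1 : M) :
    modelV ρ (s • α1) (s • α0) (s • αm1) = s • modelV ρ α1 α0 αm1 := by
  simp only [modelV]; module

theorem modelB_smul (ρ s : K) (α1 α0 αm1 : M) :
    modelB ρ (s • α1) (s • α0) (s • αm1) = s • modelB ρ α1 α0 αm1 := by
  simp only [modelB]; module

theorem linearIndependent_modelB_modelV (hρ : ρ ^ 2 ≠ 1)
    (h : LinearIndependent K ![α1, α0, αm1]) :
    LinearIndependent K ![modelB ρ α1 α0 αm1, modelV ρ α1 α0 αm1] := by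
  refine LinearIndependent.pair_iff.mpr fun x y hxy => ?_
  obtain ⟨-, h0, hm1⟩ := h.eq_zero_of_triple (a := x * ρ + y * ρ ^ 2) (b := x + y * ρ)
    (c := x * ρ + y) (by simp only [modelB, modelV] at hxy; linear_combination (norm := module) hxy)
  have hy : y * (1 - ρ ^ 2) = 0 := by linear_combination hm1 - ρ * h0
  have hy : y = 0 := (mul_eq_zero.mp hy).resolve_right (sub_ne_zero.mpr hρ.symm)
  exact ⟨by simpa [hy] using h0, hy⟩

theorem loadings_eq_smul {l k : K} (hρ : ρ ^ 2 ≠ 1) (hα : LinearIndependent K ![α1, α0, αm1])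
    (hs : s ≠ 0) (h1 : β1 = l • α1) (hp : β0 + ρ • βm1 = k • α1 + s • (α0 + ρ • αm1))
    (hb : modelB ρ α1 α0 αm1 = l • modelB ρ β1 β0 βm1 + k • modelV ρ β1 β0 βm1)
    (hu : modelU ρ β1 β0 βm1 = s • modelU ρ α1 α0 αm1)
    (hv : modelV ρ α1 α0 αm1 = s • modelV ρ β1 β0 βm1) :
    s ^ 2 = 1 ∧ β1 = s • α1 ∧ β0 = s • α0 ∧ βm1 = s • αm1 := by
  simp only [modelU, modelV, modelB] at hb hu hv
  -- `s • hb` in the basis `α1, α0, αm1`, after substituting `β1` and `β0 + ρ • βm1`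
  obtain ⟨-, e0, em1⟩ := hα.eq_zero_of_triple (a := s * l * (ρ * l + k) + k * ρ ^ 2 - s * ρ)
    (b := s ^ 2 * l + k * ρ - s) (c := s ^ 2 * l * ρ + k - s * ρ)
    (by linear_combination (norm := module) -(s • hb) + k • hv - (s * l * ρ) • h1 - (s * l) • hp)
  have hk : k = 0 := by
    have : k * (ρ ^ 2 - 1) = 0 := by linear_combination ρ * e0 - em1
    exact (mul_eq_zero.mp this).resolve_right (sub_ne_zero.mpr hρ)
  subst hk
  obtain ⟨e1, -, -⟩ := hα.eq_zero_of_triple (a := l - s) (b := 0) (c := 0)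
    (by linear_combination (norm := module) hu - h1 - ρ • hp)
  have hsl : s * l = 1 := mul_left_cancel₀ hs (by linear_combination e0)
  have hs2 : s ^ 2 = 1 := by linear_combination hsl - s * e1
  have hβ1 : β1 = s • α1 := by linear_combination (norm := module) h1 + e1 • α1
  have hv' : ρ ^ 2 • β1 + ρ • β0 + βm1 = s • (ρ ^ 2 • α1 + ρ • α0 + αm1) := by
    linear_combination (norm := module) -(s • hv) - hs2 • (ρ ^ 2 • β1 + ρ • β0 + βm1)
  have hβm1 : βm1 = s • αm1 := smul_right_injective M (sub_ne_zero.mpr hρ.symm) <| by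
    linear_combination (norm := module) hv' - ρ • hp - ρ ^ 2 • hβ1
  exact ⟨hs2, hβ1, by linear_combination (norm := module) hp - ρ • hβm1, hβm1⟩

end Model

theorem stmt_0_general {K : ℕ}
    (ρ σ ρ' σ' : ℝ) (hρ : |ρ| < 1) (hσ : 0 < σ) (hσ' : 0 < σ')
    (α1 α0 αm1 β1 β0 βm1 : Fin K → ℝ)
    (Γ Γ' : Matrix (Fin K) (Fin K) ℝ)
    (hnorm : σ ^ 2 / (1 - ρ ^ 2) = 1) (hnorm' : σ' ^ 2 / (1 - ρ' ^ 2) = 1)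
    (hli : LinearIndependent ℝ ![α1, α0, αm1])
    (hli' : LinearIndependent ℝ ![β1, β0, βm1])
    -- abbreviations for the untilded parameters
    (c : ℝ) (hc : c = σ ^ 2 / (1 - ρ ^ 2))
    (u v b : Fin K → ℝ)
    (hu : u = α1 + ρ • α0 + ρ ^ 2 • αm1)
    (hv : v = ρ ^ 2 • α1 + ρ • α0 + αm1)
    (hb : b = ρ • α1 + α0 + ρ • αm1)
    -- abbreviations for the tilded parameters
    (c' : ℝ) (hc' : c' = σ' ^ 2 / (1 - ρ' ^ 2))
    (u' v' b' : Fin K → ℝ)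
    (hu' : u' = β1 + ρ' • β0 + ρ' ^ 2 • βm1)
    (hv' : v' = ρ' ^ 2 • β1 + ρ' • β0 + βm1)
    (hb' : b' = ρ' • β1 + β0 + ρ' • βm1)
    -- equality of the covariance matrices C_k = C̃_k for k = 0, 1, 2, 3
    (hC0 : c • (vecMulVec α1 u + vecMulVec α0 b + vecMulVec αm1 v) + Γ =
           c' • (vecMulVec β1 u' + vecMulVec β0 b' + vecMulVec βm1 v') + Γ')
    (hC1 : c • (vecMulVec α1 b + vecMulVec α0 v + ρ • vecMulVec αm1 v) =
           c' • (vecMulVec β1 b' + vecMulVec β0 v' + ρ' • vecMulVec βm1 v'))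
    (hC2 : c • vecMulVec u v = c' • vecMulVec u' v')
    (hC3 : (c * ρ) • vecMulVec u v = (c' * ρ') • vecMulVec u' v') :
    ρ = ρ' ∧ σ = σ' ∧ Γ = Γ' ∧
      ∃ ε : ℝ, (ε = 1 ∨ ε = -1) ∧ β1 = ε • α1 ∧ β0 = ε • α0 ∧ βm1 = ε • αm1 := by
  obtain rfl : c = 1 := hc.trans hnorm
  obtain rfl : c' = 1 := hc'.trans hnorm'
  obtain rfl : u = modelU ρ α1 α0 αm1 := hu
  obtain rfl : v = modelV ρ α1 α0 αm1 := hv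
  obtain rfl : b = modelB ρ α1 α0 αm1 := hb
  obtain rfl : u' = modelU ρ' β1 β0 βm1 := hu'
  obtain rfl : v' = modelV ρ' β1 β0 βm1 := hv'
  obtain rfl : b' = modelB ρ' β1 β0 βm1 := hb'
  simp only [one_smul, one_mul] at hC0 hC1 hC2 hC3
  have hρ1 : ρ ^ 2 ≠ 1 := ((sq_lt_one_iff_abs_lt_one ρ).mpr hρ).ne
  obtain rfl : ρ = ρ' := smul_left_injective ℝ
    (vecMulVec_ne_zero (modelU_ne_zero hli) (modelV_ne_zero hli)) (hC3.trans (by rw [hC2]))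
  obtain ⟨s, hus, hvs⟩ := exists_smul_of_vecMulVec_eq (modelU_ne_zero hli) (modelV_ne_zero hli') hC2
  have hs : s ≠ 0 := by rintro rfl; exact modelV_ne_zero hli (by rw [hvs, zero_smul])
  have hα1 : α1 ≠ 0 := by simpa using hli.ne_zero 0
  have hC1' : vecMulVec α1 (modelB ρ α1 α0 αm1) + vecMulVec (α0 + ρ • αm1) (modelV ρ α1 α0 αm1) =
      vecMulVec β1 (modelB ρ β1 β0 βm1) + vecMulVec (β0 + ρ • βm1) (modelV ρ β1 β0 βm1) := by
    simpa only [add_vecMulVec, smul_vecMulVec, add_assoc] using hC1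
  have hb'v' := linearIndependent_modelB_modelV hρ1 hli'
  obtain ⟨l, k, h1, hp, hb⟩ := exists_eq_of_vecMulVec_add_vecMulVec_eq hb'v' hα1 hvs hC1'
  obtain ⟨hs2, rfl, rfl, rfl⟩ := loadings_eq_smul hρ1 hli hs h1 hp hb hus hvs
  have hσσ' : σ = σ' := by
    have hd : 1 - ρ ^ 2 ≠ 0 := fun h => by simp [h] at hnorm
    exact (pow_left_inj₀ hσ.le hσ'.le two_ne_zero).mp
      ((div_left_inj' hd).mp (hnorm.trans hnorm'.symm))
  have hΓΓ' : Γ = Γ' := by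
    simp only [modelU_smul, modelV_smul, modelB_smul, smul_vecMulVec, vecMulVec_smul, smul_smul,
      ← sq, hs2, one_smul] at hC0
    exact add_left_cancel hC0
  exact ⟨rfl, hσσ', hΓΓ', s, sq_eq_one_iff.mp hs2, rfl, rfl, rfl⟩

/-- identifiability of the parameters of model (M) (up to the sign of the
loading vectors) from the covariance matrices `C₀, C₁, C₂, C₃`. -/
theorem stmt_0 {K : ℕ} (hK : 1 ≤ K)
    (ρ σ ρ' σ' : ℝ) (hρ : |ρ| < 1) (hρ' : |ρ'| < 1) (hσ : 0 < σ) (hσ' : 0 < σ')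
    (α1 α0 αm1 β1 β0 βm1 : Fin K → ℝ)
    (Γ Γ' : Matrix (Fin K) (Fin K) ℝ) (hΓ : Γ.IsSymm) (hΓ' : Γ'.IsSymm)
    (hnorm : σ ^ 2 / (1 - ρ ^ 2) = 1) (hnorm' : σ' ^ 2 / (1 - ρ' ^ 2) = 1)
    (hli : LinearIndependent ℝ ![α1, α0, αm1])
    (hli' : LinearIndependent ℝ ![β1, β0, βm1])
    -- abbreviations for the untilded parameters
    (c : ℝ) (hc : c = σ ^ 2 / (1 - ρ ^ 2))
    (u v b : Fin K → ℝ)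
    (hu : u = α1 + ρ • α0 + ρ ^ 2 • αm1)
    (hv : v = ρ ^ 2 • α1 + ρ • α0 + αm1)
    (hb : b = ρ • α1 + α0 + ρ • αm1)
    -- abbreviations for the tilded parameters
    (c' : ℝ) (hc' : c' = σ' ^ 2 / (1 - ρ' ^ 2))
    (u' v' b' : Fin K → ℝ)
    (hu' : u' = β1 + ρ' • β0 + ρ' ^ 2 • βm1)
    (hv' : v' = ρ' ^ 2 • β1 + ρ' • β0 + βm1)
    (hb' : b' = ρ' • β1 + β0 + ρ' • βm1)
    -- equality of the covariance matrices C_k = C̃_k for k = 0, 1, 2, 3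
    (hC0 : c • (vecMulVec α1 u + vecMulVec α0 b + vecMulVec αm1 v) + Γ =
           c' • (vecMulVec β1 u' + vecMulVec β0 b' + vecMulVec βm1 v') + Γ')
    (hC1 : c • (vecMulVec α1 b + vecMulVec α0 v + ρ • vecMulVec αm1 v) =
           c' • (vecMulVec β1 b' + vecMulVec β0 v' + ρ' • vecMulVec βm1 v'))
    (hC2 : c • vecMulVec u v = c' • vecMulVec u' v')
    (hC3 : (c * ρ) • vecMulVec u v = (c' * ρ') • vecMulVec u' v') :
    ρ = ρ' ∧ σ = σ' ∧ Γ = Γ' ∧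
      ∃ ε : ℝ, (ε = 1 ∨ ε = -1) ∧ β1 = ε • α1 ∧ β0 = ε • α0 ∧ βm1 = ε • αm1 :=
  stmt_0_general ρ σ ρ' σ' hρ hσ hσ' α1 α0 αm1 β1 β0 βm1 Γ Γ' hnorm hnorm' hli hli' c hc u v b hu hv
    hb c' hc' u' v' b' hu' hv' hb' hC0 hC1 hC2 hC3
end

section
/- Let ρ ∈ ℝ with 0 < |ρ| < 1, and let α₁, α₀, α₋₁ ∈ ℝ^K and α̃₁, α̃₀, α̃₋₁ ∈ ℝ^K be two linearly independent triples of vectors. Set u = α₁ + ρα₀ + ρ²α₋₁, v = ρ²α₁ + ρα₀ + α₋₁ and similarly ũ, ṽ from the tilded triple with the same ρ. If α₁ α₋₁ᵀ = α̃₁ α̃₋₁ᵀ and u vᵀ = ũ ṽᵀ, then there exists ε ∈ {−1, 1} such that α̃ᵢ = ε αᵢ for each i ∈ {−1, 0, 1}. -/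
open Matrix

lemma rankone_aux {K : ℕ} {x y x' y' : Fin K → ℝ} (hx : x ≠ 0) (hy : y ≠ 0)
    (h : vecMulVec x y = vecMulVec x' y') :
    ∃ c : ℝ, c ≠ 0 ∧ x' = c • x ∧ y' = c⁻¹ • y := by
  obtain ⟨i0, hi0⟩ := Function.ne_iff.mp hx
  obtain ⟨j0, hj0⟩ := Function.ne_iff.mp hy
  simp only [Pi.zero_apply] at hi0 hj0
  have hij : ∀ i j, x i * y j = x' i * y' j := by
    intro i j
    have := congrFun (congrFun h i) j
    simpa [vecMulVec_apply] using this
  have hne : x' i0 * y' j0 ≠ 0 := by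
    rw [← hij]; exact mul_ne_zero hi0 hj0
  have hx'i0 : x' i0 ≠ 0 := left_ne_zero_of_mul hne
  have hy'j0 : y' j0 ≠ 0 := right_ne_zero_of_mul hne
  refine ⟨x' i0 / x i0, by positivity, ?_, ?_⟩
  · funext i
    have e1 := hij i j0
    have e2 := hij i0 j0
    simp only [Pi.smul_apply, smul_eq_mul]
    have h3 : x' i * x i0 * y j0 = x' i0 * x i * y j0 := by
      linear_combination x' i * e2 - x' i0 * e1
    have h4 := mul_right_cancel₀ hj0 h3
    field_simp
    linear_combination h4
  · funext j
    have e := hij i0 j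
    simp only [Pi.smul_apply, smul_eq_mul]
    rw [inv_div]
    field_simp
    linear_combination -e

lemma li_coeffs {K : ℕ} {a b c : Fin K → ℝ} (h : LinearIndependent ℝ ![a, b, c])
    (p q r : ℝ) (hz : p • a + q • b + r • c = 0) : p = 0 ∧ q = 0 ∧ r = 0 := by
  have key := Fintype.linearIndependent_iff.mp h ![p, q, r] ?_
  · exact ⟨key 0, key 1, key 2⟩
  · simpa [Fin.sum_univ_three] using hz

/-- identification of the loading vectors when `ρ ≠ 0`: if two linearly
independent triples produce the same matrices `α₁ α₋₁ᵀ` and `u vᵀ`, they coincide up to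
a common sign. -/
theorem stmt_5 {K : ℕ} (hK : 1 ≤ K)
    (ρ : ℝ) (hρ0 : 0 < |ρ|) (hρ1 : |ρ| < 1)
    (α1 α0 αm1 β1 β0 βm1 : Fin K → ℝ)
    (hli : LinearIndependent ℝ ![α1, α0, αm1])
    (hli' : LinearIndependent ℝ ![β1, β0, βm1])
    (u v u' v' : Fin K → ℝ)
    (hu : u = α1 + ρ • α0 + ρ ^ 2 • αm1)
    (hv : v = ρ ^ 2 • α1 + ρ • α0 + αm1)
    (hu' : u' = β1 + ρ • β0 + ρ ^ 2 • βm1)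
    (hv' : v' = ρ ^ 2 • β1 + ρ • β0 + βm1)
    (h1 : vecMulVec α1 αm1 = vecMulVec β1 βm1)
    (h2 : vecMulVec u v = vecMulVec u' v') :
    ∃ ε : ℝ, (ε = 1 ∨ ε = -1) ∧ β1 = ε • α1 ∧ β0 = ε • α0 ∧ βm1 = ε • αm1 := by
  have hρ : ρ ≠ 0 := fun h => by simp [h] at hρ0
  have hρsq : ρ ^ 2 < 1 := by
    have := abs_nonneg ρ
    nlinarith [sq_abs ρ]
  -- nonzero vectors
  have hα1 : α1 ≠ 0 := by
    intro h
    have := (li_coeffs hli 1 0 0 (by simp [h])).1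
    norm_num at this
  have hαm1 : αm1 ≠ 0 := by
    intro h
    have := (li_coeffs hli 0 0 1 (by simp [h])).2.2
    norm_num at this
  have hune : u ≠ 0 := by
    intro h
    have := (li_coeffs hli 1 ρ (ρ ^ 2) (by simp only [one_smul]; rw [← hu]; exact h)).1
    norm_num at this
  have hvne : v ≠ 0 := by
    intro h
    have := (li_coeffs hli (ρ ^ 2) ρ 1 (by simp only [one_smul]; rw [← hv]; exact h)).2.2
    norm_num at this
  obtain ⟨c, hc, hb1, hbm1⟩ := rankone_aux hα1 hαm1 h1
  obtain ⟨d, hd, hu'd, hv'd⟩ := rankone_aux hune hvne h2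
  rw [hu, hu', hb1, hbm1] at hu'd
  rw [hv, hv', hb1, hbm1] at hv'd
  -- key zero combination
  have key : (d - c - ρ ^ 2 * d⁻¹ + ρ ^ 2 * c) • α1 + (d * ρ - d⁻¹ * ρ) • α0
      + (d * ρ ^ 2 - c⁻¹ * ρ ^ 2 - d⁻¹ + c⁻¹) • αm1 = 0 := by
    funext i
    have e1 := congrFun hu'd i
    have e2 := congrFun hv'd i
    simp only [Pi.add_apply, Pi.smul_apply, Pi.zero_apply, smul_eq_mul] at e1 e2 ⊢
    linear_combination e2 - e1
  obtain ⟨k1, k2, k3⟩ := li_coeffs hli _ _ _ key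
  have hd' : d = d⁻¹ := mul_right_cancel₀ hρ (by linarith : d * ρ = d⁻¹ * ρ)
  have hdd : d * d = 1 := by nth_rewrite 2 [hd']; exact mul_inv_cancel₀ hd
  have hdinv : d⁻¹ = d := hd'.symm
  have hcd : c = d := by
    rw [hdinv] at k1
    have : (d - c) * (1 - ρ ^ 2) = 0 := by linarith
    rcases mul_eq_zero.mp this with h | h
    · linarith
    · nlinarith
  have hcc : c * c = 1 := by rw [hcd]; exact hdd
  have hcinv : c⁻¹ = c := inv_eq_of_mul_eq_one_right hcc
  have hb0 : β0 = d • α0 := by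
    funext i
    have e1 := congrFun hu'd i
    simp only [Pi.add_apply, Pi.smul_apply, smul_eq_mul] at e1 ⊢
    have : ρ * β0 i = ρ * (d * α0 i) := by
      rw [hcinv, hcd] at e1
      linear_combination e1
    exact mul_left_cancel₀ hρ this
  refine ⟨d, ?_, ?_, hb0, ?_⟩
  · rcases mul_self_eq_one_iff.mp hdd with h | h
    · exact Or.inl h
    · exact Or.inr h
  · rw [hb1, hcd]
  · rw [hbm1, hcinv, hcd]
end

section
/- If the vectors α₁, α₀, α₋₁ ∈ ℝ^K are linearly independent and |ρ| < 1, then the lag-2 covariance matrix C₂ = c u vᵀ of model (M) is not a symmetric matrix; hence the space-time covariance function of model (M) is not fully symmetric and therefore not separable. -/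
open Matrix

/-! If `u vᵀ` is symmetric then `(u j) v = (v j) u` for every `j`, so `u` and `v` are parallel.
In model (M) they cannot be: `u` and `v` carry the coefficients `(1, ρ, ρ²)` and `(ρ², ρ, 1)` on
the independent loadings, and these are proportional only when `ρ² = 1`. -/

theorem Matrix.not_isSymm_vecMulVec_of_linearIndependent {n R : Type*} [CommRing R] [Nontrivial R]
    {u v : n → R} (huv : LinearIndependent R ![u, v]) : ¬ (vecMulVec u v).IsSymm := by
  intro hsym
  refine huv.ne_zero 0 (funext fun j => ?_)
  have hpar : (-v j) • u + u j • v = 0 := funext fun i => by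
    have := hsym.apply i j
    simp only [vecMulVec_apply] at this
    simp only [Pi.add_apply, Pi.smul_apply, smul_eq_mul, Pi.zero_apply]
    linear_combination this
  exact (LinearIndependent.pair_iff.mp huv _ _ hpar).2

theorem LinearIndependent.pair_of_reversed_coeffs {R M : Type*} [CommRing R] [NoZeroDivisors R]
    [AddCommGroup M] [Module R M] {x y z : M} (hxyz : LinearIndependent R ![x, y, z]) {ρ : R}
    (hρ : ρ ^ 2 ≠ 1) : LinearIndependent R ![x + ρ • y + ρ ^ 2 • z, ρ ^ 2 • x + ρ • y + z] := by
  refine LinearIndependent.pair_iff.mpr fun s t hst => ?_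
  have hcoeff := Fintype.linearIndependent_iff.mp hxyz ![s + t * ρ ^ 2, (s + t) * ρ, s * ρ ^ 2 + t]
    (by
      simp only [Fin.sum_univ_three, ← hst, Fin.isValue, cons_val_zero, cons_val_one, cons_val]
      module)
  have h0 : s + t * ρ ^ 2 = 0 := by simpa using hcoeff 0
  have h1 : (s + t) * ρ = 0 := by simpa using hcoeff 1
  have h2 : s * ρ ^ 2 + t = 0 := by simpa using hcoeff 2
  have hsum : s + t = 0 := by linear_combination h0 + h2 - ρ * h1
  have hs : s = 0 := by
    refine (mul_eq_zero.mp ?_).resolve_right (sub_ne_zero.mpr hρ.symm)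
    linear_combination h0 - ρ ^ 2 * hsum
  exact ⟨hs, by linear_combination hsum - hs⟩

theorem stmt_7_general {K : ℕ}
    (ρ σ : ℝ) (hρ : |ρ| < 1) (hσ : 0 < σ)
    (α1 α0 αm1 : Fin K → ℝ)
    (hli : LinearIndependent ℝ ![α1, α0, αm1])
    (c : ℝ) (hc : c = σ ^ 2 / (1 - ρ ^ 2))
    (u v : Fin K → ℝ)
    (hu : u = α1 + ρ • α0 + ρ ^ 2 • αm1)
    (hv : v = ρ ^ 2 • α1 + ρ • α0 + αm1)
    (C2 : Matrix (Fin K) (Fin K) ℝ)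
    (hC2 : C2 = c • vecMulVec u v) :
    ¬ C2.IsSymm := by
  have hρ2 : ρ ^ 2 < 1 := (sq_lt_one_iff_abs_lt_one ρ).mpr hρ
  have hc0 : c ≠ 0 := by
    rw [hc]
    exact (div_pos (by positivity) (by linarith)).ne'
  have huv : LinearIndependent ℝ ![u, v] := by
    rw [hu, hv]
    exact hli.pair_of_reversed_coeffs hρ2.ne
  intro hsym
  refine not_isSymm_vecMulVec_of_linearIndependent huv ?_
  simpa [hC2, inv_smul_smul₀ hc0] using hsym.smul c⁻¹

/-- under linear independence of the loading vectors, the lag-2 covariance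
`C₂ = c u vᵀ` of model (M) is not symmetric (hence the space-time covariance function is
not fully symmetric and not separable). -/
theorem stmt_7 {K : ℕ} (hK : 1 ≤ K)
    (ρ σ : ℝ) (hρ : |ρ| < 1) (hσ : 0 < σ)
    (α1 α0 αm1 : Fin K → ℝ)
    (hli : LinearIndependent ℝ ![α1, α0, αm1])
    (c : ℝ) (hc : c = σ ^ 2 / (1 - ρ ^ 2))
    (u v : Fin K → ℝ)
    (hu : u = α1 + ρ • α0 + ρ ^ 2 • αm1)
    (hv : v = ρ ^ 2 • α1 + ρ • α0 + αm1)
    (C2 : Matrix (Fin K) (Fin K) ℝ)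
    (hC2 : C2 = c • vecMulVec u v) :
    ¬ C2.IsSymm :=
  stmt_7_general ρ σ hρ hσ α1 α0 αm1 hli c hc u v hu hv C2 hC2
end
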